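/- Let M be a simple matroid of rank k+1 (k ≥ 2) with a 2-colouring (R,B) of its ground set such that every hyperplane of M contains an element of R. If L is a line of M and there exists a rank-(k−1) flat F of M skew to L with F ∩ R = ∅, then |L| ≤ |R|. -/

import Mathlib

/-!
For each point `e` of the line `L`, the flat `cl(F ∪ {e})` is a hyperplane, so it contains a red
element `g e`. Skewness of `F` and `L` makes `F ∪ {e, e'}` have rank `r(F) + 2` for distinct
`e, e' ∈ L`, so the hyperplanes through `e` and `e'` meet exactly in `F`; as `F` has no red
elements, `g` is injective on `L`.
-/

open Set
open scoped Classical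

namespace MatroidPaper

variable {α : Type*}

/-- The rank of a set in a matroid: the supremum of cardinalities of independent subsets. -/
noncomputable def rkS (M : Matroid α) (X : Set α) : ℕ :=
  sSup {n | ∃ I, M.Indep I ∧ I ⊆ X ∧ I.ncard = n}

/-- The rank of a matroid. -/
noncomputable def rk (M : Matroid α) : ℕ := rkS M M.E

/-- A hyperplane: a flat of rank `rk M - 1`. -/
def Hyp (M : Matroid α) (H : Set α) : Prop := M.IsFlat H ∧ rkS M H = rk M - 1

/-- Two sets are skew if the rank of their union is the sum of their ranks. -/
def SkewSets (M : Matroid α) (X Y : Set α) : Prop :=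
  rkS M (X ∪ Y) = rkS M X + rkS M Y

/-- A simple matroid: every subset of the ground set with at most two elements is independent. -/
def SimpleM (M : Matroid α) : Prop := ∀ X ⊆ M.E, X.ncard ≤ 2 → M.Indep X

/-- A real-representable matroid. -/
def RealRep (M : Matroid α) : Prop :=
  ∃ (n : ℕ) (φ : α → (Fin n → ℝ)), ∀ I, I ⊆ M.E →
    (M.Indep I ↔ LinearIndependent ℝ (fun x : I => φ x))

/-- A matroid is `k`-degenerate if it has rank at most one or its ground set is covered by
flats of rank at least two with `∑ (r(Fᵢ) - 1) ≤ k - 1`. -/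
def Degen (M : Matroid α) (k : ℕ) : Prop :=
  rk M ≤ 1 ∨ ∃ (t : ℕ) (F : Fin t → Set α),
    (∀ i, M.IsFlat (F i) ∧ 2 ≤ rkS M (F i)) ∧
    M.E ⊆ ⋃ i, F i ∧ ∑ i, (rkS M (F i) - 1) ≤ k - 1

/-- A set `X` is `k`-degenerate in `M` if the restriction `M|X` is a `k`-degenerate matroid. -/
def DegenSet (M : Matroid α) (X : Set α) (k : ℕ) : Prop := Degen (M.restrict X) k

/-- `N` is the (one-fold) principal truncation of `F` in `M`. -/
noncomputable def IsPT (M : Matroid α) (F : Set α) (N : Matroid α) : Prop :=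
  N.E = M.E ∧ ∀ X ⊆ M.E,
    rkS N X = if F ⊆ M.closure X then rkS M X - 1 else rkS M X

/-- `N` is the complete principal truncation `M ÷ F` of `F` in `M`. -/
def IsCPT (M : Matroid α) (F : Set α) (N : Matroid α) : Prop :=
  N.E = M.E ∧ ∀ X ⊆ M.E,
    rkS N X = min (rkS M X + (rkS M F - 1)) (rkS M (X ∪ F)) - (rkS M F - 1)

open Matroid

variable {M : Matroid α} {I X Y Z F : Set α} {e e' : α}

lemma rkS_eq_ncard [M.RankFinite] (hI : M.IsBasis' I X) : rkS M X = I.ncard := by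
  refine IsGreatest.csSup_eq ⟨⟨I, hI.indep, hI.subset, rfl⟩, ?_⟩
  rintro _ ⟨J, hJ, hJX, rfl⟩
  have hle : J.encard ≤ I.encard := hI.encard_eq_eRk ▸ hJ.encard_le_eRk_of_subset hJX
  rwa [← hJ.finite.cast_ncard_eq, ← hI.indep.finite.cast_ncard_eq, Nat.cast_le] at hle

lemma cast_rkS [M.RankFinite] (X : Set α) : (rkS M X : ℕ∞) = M.eRk X := by
  obtain ⟨I, hI⟩ := M.exists_isBasis' X
  rw [rkS_eq_ncard hI, hI.indep.finite.cast_ncard_eq, hI.encard_eq_eRk]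

lemma rkS_mono [M.RankFinite] (h : X ⊆ Y) : rkS M X ≤ rkS M Y := by
  exact_mod_cast (cast_rkS (M := M) X).trans_le ((M.eRk_mono h).trans_eq (cast_rkS Y).symm)

lemma rkS_closure [M.RankFinite] (X : Set α) : rkS M (M.closure X) = rkS M X := by
  exact_mod_cast (cast_rkS _).trans ((M.eRk_closure_eq X).trans (cast_rkS X).symm)

lemma rkS_union_add_rkS_inter_le [M.RankFinite] (X Y : Set α) :
    rkS M (X ∪ Y) + rkS M (X ∩ Y) ≤ rkS M X + rkS M Y := by
  have h := M.eRk_inter_add_eRk_union_le X Y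
  simp only [← cast_rkS] at h
  rw [add_comm] at h
  exact_mod_cast h

lemma rkS_union_le [M.RankFinite] (X Y : Set α) : rkS M (X ∪ Y) ≤ rkS M X + rkS M Y :=
  (Nat.le_add_right _ _).trans (rkS_union_add_rkS_inter_le X Y)

lemma rkS_insert_le [M.RankFinite] (e : α) (X : Set α) : rkS M (insert e X) ≤ rkS M X + 1 := by
  have h := M.eRk_insert_le_add_one e X
  simp only [← cast_rkS] at h
  exact_mod_cast h

lemma closure_eq_closure_of_subset_of_rkS_le [M.RankFinite] (hXY : X ⊆ Y)
    (hr : rkS M Y ≤ rkS M X) : M.closure X = M.closure Y :=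
  (M.isRkFinite_set X).closure_eq_closure_of_subset_of_eRk_ge_eRk hXY <| by
    simpa only [← cast_rkS] using (Nat.cast_le (α := ℕ∞)).2 hr

lemma SimpleM.rkS_eq_ncard [M.RankFinite] (hs : SimpleM M) (hX : X ⊆ M.E) (h : X.ncard ≤ 2) :
    rkS M X = X.ncard :=
  MatroidPaper.rkS_eq_ncard (hs X hX h).isBasis_self.isBasis'

lemma SkewSets.of_subset_right [M.RankFinite] (h : SkewSets M X Y) (hZY : Z ⊆ Y) :
    SkewSets M X Z := by
  have hsub := rkS_union_add_rkS_inter_le (M := M) (X ∪ Z) Y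
  have hZ : rkS M Z ≤ rkS M ((X ∪ Z) ∩ Y) :=
    rkS_mono (subset_inter subset_union_right hZY)
  rw [union_assoc, union_eq_self_of_subset_left hZY] at hsub
  unfold SkewSets at h ⊢
  have := rkS_union_le (M := M) X Z
  omega

lemma closure_insert_inter_closure_insert_subset [M.RankFinite] (hF : F ⊆ M.E) (he : e ∈ M.E)
    (he' : e' ∈ M.E) (hr : rkS M (insert e (insert e' F)) = rkS M F + 2) :
    M.closure (insert e F) ∩ M.closure (insert e' F) ⊆ M.closure F := by
  set A := M.closure (insert e F)
  set B := M.closure (insert e' F)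
  have hFA : insert e F ⊆ A := M.subset_closure _ (insert_subset he hF)
  have hFB : insert e' F ⊆ B := M.subset_closure _ (insert_subset he' hF)
  have hA : rkS M A ≤ rkS M F + 1 := (rkS_closure _).trans_le (rkS_insert_le e F)
  have hB : rkS M B ≤ rkS M F + 1 := (rkS_closure _).trans_le (rkS_insert_le e' F)
  have hAB : rkS M F + 2 ≤ rkS M (A ∪ B) :=
    hr ▸ rkS_mono (insert_subset (Or.inl (hFA (mem_insert _ _))) (hFB.trans subset_union_right))
  have hsub := rkS_union_add_rkS_inter_le (M := M) A B
  have hcl : M.closure F = M.closure (A ∩ B) :=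
    closure_eq_closure_of_subset_of_rkS_le
      (subset_inter ((subset_insert _ _).trans hFA) ((subset_insert _ _).trans hFB)) (by omega)
  exact hcl ▸ M.subset_closure _ (inter_subset_left.trans (M.closure_subset_ground _))

theorem stmt8_general (k : ℕ) (hk : 2 ≤ k) (M : Matroid α) [M.Finite] (hs : SimpleM M)
    (hr : rk M = k + 1) (R B : Set α) (hRB : R ∪ B = M.E)
    (hhyp : ∀ H, Hyp M H → (H ∩ R).Nonempty)
    (L : Set α) (hL : M.IsFlat L)
    (F : Set α) (hF : M.IsFlat F) (hFr : rkS M F = k - 1)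
    (hskew : SkewSets M F L) (hFR : F ∩ R = ∅) :
    L.ncard ≤ R.ncard := by
  have hLE := hL.subset_ground
  have hrk1 : ∀ e ∈ L, rkS M (insert e F) = k := fun e he => by
    have h := hskew.of_subset_right (singleton_subset_iff.2 he)
    rw [SkewSets, union_singleton, hs.rkS_eq_ncard (singleton_subset_iff.2 (hLE he))
      (by simp), ncard_singleton] at h
    omega
  have hrk2 : ∀ e ∈ L, ∀ e' ∈ L, e ≠ e' →
      rkS M (insert e (insert e' F)) = rkS M F + 2 := by
    intro e he e' he' hne
    have hpair : {e, e'} ⊆ L := insert_subset he (singleton_subset_iff.2 he')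
    have h := hskew.of_subset_right hpair
    rwa [SkewSets, union_insert, union_singleton, hs.rkS_eq_ncard (hpair.trans hLE)
      (ncard_pair hne).le, ncard_pair hne] at h
  have hHyp : ∀ e ∈ L, Hyp M (M.closure (insert e F)) := fun e he =>
    ⟨M.isFlat_closure _, by rw [rkS_closure, hrk1 e he, hr]; rfl⟩
  choose! g hgH hgR using fun e he => hhyp _ (hHyp e he)
  have hinj : InjOn g L := by
    intro e he e' he' hgg
    by_contra hne
    have hgF := closure_insert_inter_closure_insert_subset hF.subset_ground (hLE he) (hLE he')
      (hrk2 e he e' he' hne) ⟨hgH e he, hgg ▸ hgH e' he'⟩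
    rw [hF.closure] at hgF
    exact (eq_empty_iff_forall_notMem.1 hFR) _ ⟨hgF, hgR e he⟩
  calc L.ncard = (g '' L).ncard := hinj.ncard_image.symm
    _ ≤ R.ncard :=
      ncard_le_ncard (image_subset_iff.2 hgR) (M.set_finite R (hRB ▸ subset_union_left))

/-- If some rank-`(k-1)` flat skew to the line `L` avoids `R`, then `|L| ≤ |R|`. -/
theorem stmt8 (k : ℕ) (hk : 2 ≤ k) (M : Matroid α) [M.Finite] (hs : SimpleM M)
    (hr : rk M = k + 1) (R B : Set α) (hRB : R ∪ B = M.E) (hd : Disjoint R B)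
    (hhyp : ∀ H, Hyp M H → (H ∩ R).Nonempty)
    (L : Set α) (hL : M.IsFlat L) (hL2 : rkS M L = 2)
    (F : Set α) (hF : M.IsFlat F) (hFr : rkS M F = k - 1)
    (hskew : SkewSets M F L) (hFR : F ∩ R = ∅) :
    L.ncard ≤ R.ncard :=
  stmt8_general k hk M hs hr R B hRB hhyp L hL F hF hFr hskew hFR

end MatroidPaper
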